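/- Let a^γ = (a†)^r a^s and a^δ = (a†)^r̂ a^ŝ be normal-ordered monomials in the single-mode Weyl algebra with nonzero commutator. If r̂·s = r·ŝ then deg([a^γ, a^δ]) = r + s + r̂ + ŝ − 4, and otherwise deg([a^γ, a^δ]) = r + s + r̂ + ŝ − 2. -/

import Mathlib

open scoped BigOperators

namespace WeylPaper

/-- Defining relations of the `n`-th Weyl algebra: generators `Sum.inl k` are the
annihilation operators `aₖ`, generators `Sum.inr k` are the creation operators `aₖ†`,
with `[aᵢ, aⱼ†] = δᵢⱼ` and all other commutators of generators vanishing. -/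
inductive WeylRel (n : ℕ) :
    FreeAlgebra ℂ (Fin n ⊕ Fin n) → FreeAlgebra ℂ (Fin n ⊕ Fin n) → Prop
  | ann_cre (i j : Fin n) :
      WeylRel n (FreeAlgebra.ι ℂ (Sum.inl i) * FreeAlgebra.ι ℂ (Sum.inr j))
        (FreeAlgebra.ι ℂ (Sum.inr j) * FreeAlgebra.ι ℂ (Sum.inl i) +
          if i = j then 1 else 0)
  | ann_ann (i j : Fin n) :
      WeylRel n (FreeAlgebra.ι ℂ (Sum.inl i) * FreeAlgebra.ι ℂ (Sum.inl j))
        (FreeAlgebra.ι ℂ (Sum.inl j) * FreeAlgebra.ι ℂ (Sum.inl i))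
  | cre_cre (i j : Fin n) :
      WeylRel n (FreeAlgebra.ι ℂ (Sum.inr i) * FreeAlgebra.ι ℂ (Sum.inr j))
        (FreeAlgebra.ι ℂ (Sum.inr j) * FreeAlgebra.ι ℂ (Sum.inr i))

/-- The `n`-th Weyl algebra `Aₙ`. -/
abbrev Weyl (n : ℕ) := RingQuot (WeylRel n)

/-- The annihilation operator `aₖ`. -/
noncomputable def ann {n : ℕ} (k : Fin n) : Weyl n :=
  RingQuot.mkAlgHom ℂ (WeylRel n) (FreeAlgebra.ι ℂ (Sum.inl k))

/-- The creation operator `aₖ†`. -/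
noncomputable def cre {n : ℕ} (k : Fin n) : Weyl n :=
  RingQuot.mkAlgHom ℂ (WeylRel n) (FreeAlgebra.ι ℂ (Sum.inr k))

/-- The commutator `[x, y] = xy - yx`. -/
def comm {n : ℕ} (x y : Weyl n) : Weyl n := x * y - y * x

/-- The normal-ordered monomial `a^{(α,β)} = ∏ⱼ (aⱼ†)^{αⱼ} · ∏ⱼ aⱼ^{βⱼ}`. -/
noncomputable def nom {n : ℕ} (α β : Fin n → ℕ) : Weyl n :=
  ((List.finRange n).map fun j => cre j ^ α j).prod *
  ((List.finRange n).map fun j => ann j ^ β j).prod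

/-- `degLe x d` : `x` admits an expansion into normal-ordered monomials of degree
`|γ| = |α| + |β| ≤ d` (this is "deg(x) ≤ d"; it holds for `x = 0` and every `d`,
matching `deg 0 = -∞`). -/
def degLe {n : ℕ} (x : Weyl n) (d : ℤ) : Prop :=
  ∃ c : ((Fin n → ℕ) × (Fin n → ℕ)) →₀ ℂ,
    x = c.sum (fun γ z => z • nom γ.1 γ.2) ∧
    ∀ γ ∈ c.support, ((∑ j, γ.1 j : ℕ) : ℤ) + ((∑ j, γ.2 j : ℕ) : ℤ) ≤ d

/-- `hasDeg x d` : `x` has degree exactly `d`. -/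
def hasDeg {n : ℕ} (x : Weyl n) (d : ℤ) : Prop := degLe x d ∧ ¬ degLe x (d - 1)

/-- The generator corresponding to a letter. -/
noncomputable def gen {n : ℕ} : (Fin n ⊕ Fin n) → Weyl n := Sum.elim ann cre

/-- The monomial (word in the generators `aₖ`, `aₖ†`) given by a list of letters. -/
noncomputable def word {n : ℕ} (w : List (Fin n ⊕ Fin n)) : Weyl n := (w.map gen).prod

/-- `α` : number of occurrences of `aⱼ†` in the word `w`. -/
def mdegC {n : ℕ} (w : List (Fin n ⊕ Fin n)) (j : Fin n) : ℕ := w.count (Sum.inr j)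

/-- `β` : number of occurrences of `aⱼ` in the word `w`. -/
def mdegA {n : ℕ} (w : List (Fin n ⊕ Fin n)) (j : Fin n) : ℕ := w.count (Sum.inl j)

/-- The basis element `g₊^{(α,β)} = i (a^{(β,α)} + a^{(α,β)})`. -/
noncomputable def gplus {n : ℕ} (α β : Fin n → ℕ) : Weyl n :=
  Complex.I • (nom β α + nom α β)

/-- The basis element `g₋^{(α,β)} = a^{(β,α)} - a^{(α,β)}`. -/
noncomputable def gminus {n : ℕ} (α β : Fin n → ℕ) : Weyl n :=
  nom β α - nom α β

/-- Type synonym for the opposite algebra, with ℂ acting through conjugation;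
used to construct the adjoint `(·)†`. -/
def Conj (n : ℕ) : Type := (Weyl n)ᵐᵒᵖ

instance (n : ℕ) : Ring (Conj n) := inferInstanceAs (Ring (Weyl n)ᵐᵒᵖ)

noncomputable instance (n : ℕ) : Algebra ℂ (Conj n) :=
  RingHom.toAlgebra' ((algebraMap ℂ (Weyl n)ᵐᵒᵖ).comp (starRingEnd ℂ))
    (fun c x =>
      Algebra.commutes (A := (Weyl n)ᵐᵒᵖ) (starRingEnd ℂ c) (show (Weyl n)ᵐᵒᵖ from x))

noncomputable def daggerAux (n : ℕ) : FreeAlgebra ℂ (Fin n ⊕ Fin n) →ₐ[ℂ] Conj n :=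
  FreeAlgebra.lift ℂ fun s =>
    (MulOpposite.op (Sum.elim (fun k => cre k) (fun k => ann k) s : Weyl n) : Conj n)

noncomputable def daggerHom (n : ℕ) : Weyl n →+* Conj n :=
  RingQuot.lift ⟨(daggerAux n).toRingHom, by
    have key : ∀ (x y : FreeAlgebra ℂ (Fin n ⊕ Fin n)), WeylRel n x y →
        RingQuot.mkAlgHom ℂ (WeylRel n) x = RingQuot.mkAlgHom ℂ (WeylRel n) y :=
      fun x y h => RingQuot.mkAlgHom_rel ℂ h
    have hι : ∀ s : Fin n ⊕ Fin n, daggerAux n (FreeAlgebra.ι ℂ s) =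
        (MulOpposite.op (Sum.elim (fun k => cre k) (fun k => ann k) s : Weyl n) : Conj n) :=
      fun s => FreeAlgebra.lift_ι_apply _ _
    intro x y h
    induction h with
    | ann_cre i j =>
        show (daggerAux n) _ = (daggerAux n) _
        by_cases hij : i = j
        · subst hij
          have hcomm : (ann i : Weyl n) * cre i = cre i * ann i + 1 := by
            have hrel := key _ _ (WeylRel.ann_cre i i)
            rw [if_pos rfl] at hrel
            simpa [ann, cre] using hrel
          simp only [eq_self_iff_true, if_true, ite_true, map_mul, map_add, map_one, hι,
            FreeAlgebra.lift_ι_apply, Sum.elim_inl, Sum.elim_inr]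
          calc (MulOpposite.op (cre i) : Conj n) * MulOpposite.op (ann i)
              = MulOpposite.op ((ann i : Weyl n) * cre i) := rfl
            _ = MulOpposite.op ((cre i : Weyl n) * ann i + 1) := by rw [hcomm]
            _ = MulOpposite.op (ann i) * MulOpposite.op (cre i) + 1 := rfl
        · have hcomm : (ann j : Weyl n) * cre i = cre i * ann j := by
            have hrel := key _ _ (WeylRel.ann_cre j i)
            rw [if_neg (fun h => hij h.symm)] at hrel
            simpa [ann, cre] using hrel
          simp only [if_neg hij, map_mul, map_add, map_zero, add_zero, hι,
            FreeAlgebra.lift_ι_apply, Sum.elim_inl, Sum.elim_inr]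
          calc (MulOpposite.op (cre i) : Conj n) * MulOpposite.op (ann j)
              = MulOpposite.op ((ann j : Weyl n) * cre i) := rfl
            _ = MulOpposite.op ((cre i : Weyl n) * ann j) := by rw [hcomm]
            _ = MulOpposite.op (ann j) * MulOpposite.op (cre i) := rfl
    | ann_ann i j =>
        show (daggerAux n) _ = (daggerAux n) _
        have hcomm : (cre j : Weyl n) * cre i = cre i * cre j := by
          simpa [cre] using key _ _ (WeylRel.cre_cre j i)
        simp only [map_mul, hι, FreeAlgebra.lift_ι_apply, Sum.elim_inl]
        calc (MulOpposite.op (cre i) : Conj n) * MulOpposite.op (cre j)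
            = MulOpposite.op ((cre j : Weyl n) * cre i) := rfl
          _ = MulOpposite.op ((cre i : Weyl n) * cre j) := by rw [hcomm]
          _ = MulOpposite.op (cre j) * MulOpposite.op (cre i) := rfl
    | cre_cre i j =>
        show (daggerAux n) _ = (daggerAux n) _
        have hcomm : (ann j : Weyl n) * ann i = ann i * ann j := by
          simpa [ann] using key _ _ (WeylRel.ann_ann j i)
        simp only [map_mul, hι, FreeAlgebra.lift_ι_apply, Sum.elim_inr]
        calc (MulOpposite.op (ann i) : Conj n) * MulOpposite.op (ann j)
            = MulOpposite.op ((ann j : Weyl n) * ann i) := rfl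
          _ = MulOpposite.op ((ann i : Weyl n) * ann j) := by rw [hcomm]
          _ = MulOpposite.op (ann j) * MulOpposite.op (ann i) := rfl⟩

/-- The adjoint `(·)†` : the ℂ-antilinear anti-automorphism of the Weyl algebra
determined by `(aⱼ)† = aⱼ†` and `(aⱼ†)† = aⱼ`. -/
noncomputable def dagger {n : ℕ} (x : Weyl n) : Weyl n :=
  MulOpposite.unop (show (Weyl n)ᵐᵒᵖ from daggerHom n x)


/-! ### Auxiliary development for statement6 -/

section Rep

open MvPolynomial

noncomputable abbrev Pc : Type := MvPolynomial (Fin 2) ℂ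

noncomputable def Aop : Module.End ℂ Pc :=
  ((pderiv (0 : Fin 2)).toLinearMap : MvPolynomial (Fin 2) ℂ →ₗ[ℂ] MvPolynomial (Fin 2) ℂ)
    + LinearMap.mulLeft ℂ (X 1 : MvPolynomial (Fin 2) ℂ)

noncomputable def Xop : Module.End ℂ Pc :=
  LinearMap.mulLeft ℂ (X 0 : MvPolynomial (Fin 2) ℂ)

lemma AX : Aop * Xop = Xop * Aop + 1 := by
  refine LinearMap.ext fun p => ?_
  simp only [Aop, Xop, Module.End.mul_apply, LinearMap.add_apply, Module.End.one_apply,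
    Derivation.coeFn_coe, LinearMap.mulLeft_apply]
  rw [Derivation.leibniz]
  simp only [pderiv_X_self, smul_eq_mul]
  ring

noncomputable def rho : Weyl 1 →ₐ[ℂ] Module.End ℂ Pc :=
  RingQuot.liftAlgHom ℂ ⟨FreeAlgebra.lift ℂ (Sum.elim (fun _ => Aop) (fun _ => Xop)), by
    intro x y h
    induction h with
    | ann_cre i j =>
        have hij : i = j := Subsingleton.elim i j
        subst hij
        rw [if_pos rfl]
        simp only [map_mul, map_add, map_one, FreeAlgebra.lift_ι_apply,
          Sum.elim_inl, Sum.elim_inr]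
        exact AX
    | ann_ann i j => simp [FreeAlgebra.lift_ι_apply]
    | cre_cre i j => simp [FreeAlgebra.lift_ι_apply]⟩

lemma rho_ann : rho (ann 0) = Aop := by
  simp [rho, ann, RingQuot.liftAlgHom_mkAlgHom_apply, FreeAlgebra.lift_ι_apply]

lemma rho_cre : rho (cre 0) = Xop := by
  simp [rho, cre, RingQuot.liftAlgHom_mkAlgHom_apply, FreeAlgebra.lift_ι_apply]

lemma Aop_pow_one (b : ℕ) : (Aop ^ b) 1 = ((X 1 : MvPolynomial (Fin 2) ℂ) ^ b : Pc) := by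
  induction b with
  | zero => simp
  | succ k ih =>
      rw [pow_succ', Module.End.mul_apply, ih]
      simp only [Aop, LinearMap.add_apply, Derivation.coeFn_coe, LinearMap.mulLeft_apply]
      rw [Derivation.leibniz_pow, pderiv_X_of_ne (by decide)]
      simp [pow_succ, mul_comm]

lemma Xop_pow_apply (a : ℕ) (p : Pc) :
    (Xop ^ a) p = ((X 0 : MvPolynomial (Fin 2) ℂ) ^ a * p : Pc) := by
  induction a with
  | zero => simp
  | succ k ih =>
      rw [pow_succ', Module.End.mul_apply, ih]
      simp only [Xop, LinearMap.mulLeft_apply]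
      ring

/-- the constant function on `Fin 1` -/
def cst (p : ℕ) : Fin 1 → ℕ := fun _ => p

lemma nom_eq (p q : ℕ) :
    nom (cst p) (cst q) = cre (0 : Fin 1) ^ p * ann (0 : Fin 1) ^ q := by
  simp [nom, List.finRange, cst]

lemma rho_nom (α β : Fin 1 → ℕ) :
    rho (nom α β) 1 = ((X 0 : MvPolynomial (Fin 2) ℂ) ^ α 0 * (X 1) ^ β 0 : Pc) := by
  have hα : α = cst (α 0) := funext fun i => by rw [Subsingleton.elim i 0]; rfl
  have hβ : β = cst (β 0) := funext fun i => by rw [Subsingleton.elim i 0]; rfl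
  have hn : nom α β = cre 0 ^ α 0 * ann 0 ^ β 0 := by
    rw [show nom α β = nom (cst (α 0)) (cst (β 0)) by rw [← hα, ← hβ], nom_eq]
  rw [hn, map_mul, map_pow, map_pow, rho_ann, rho_cre, Module.End.mul_apply,
    Aop_pow_one, Xop_pow_apply]

noncomputable def lcoeff2 (e : Fin 2 →₀ ℕ) : Pc →ₗ[ℂ] ℂ where
  toFun p := coeff e p
  map_add' p q := coeff_add e p q
  map_smul' c p := coeff_smul e c p

/-- extract the coefficient of `(a†)^a a^b` in the normal-ordered expansion -/
noncomputable def coeffW (a b : ℕ) : Weyl 1 →ₗ[ℂ] ℂ :=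
  (lcoeff2 (Finsupp.single 0 a + Finsupp.single 1 b)).comp
    ((LinearMap.applyₗ (1 : Pc)).comp rho.toLinearMap)

lemma sng_eq_iff (a b a' b' : ℕ) :
    (Finsupp.single (0 : Fin 2) a + Finsupp.single 1 b
      = Finsupp.single 0 a' + Finsupp.single 1 b') ↔ a = a' ∧ b = b' := by
  constructor
  · intro h
    constructor
    · have := congrArg (fun f => f 0) h
      simpa [Finsupp.single_apply] using this
    · have := congrArg (fun f => f 1) h
      simpa [Finsupp.single_apply] using this
  · rintro ⟨rfl, rfl⟩; rfl

lemma coeffW_nom (a b : ℕ) (α β : Fin 1 → ℕ) :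
    coeffW a b (nom α β) = if α 0 = a ∧ β 0 = b then 1 else 0 := by
  have : coeffW a b (nom α β)
      = coeff (Finsupp.single 0 a + Finsupp.single 1 b) (rho (nom α β) 1) := rfl
  rw [this, rho_nom, X_pow_eq_monomial, X_pow_eq_monomial, monomial_mul, coeff_monomial]
  by_cases h : α 0 = a ∧ β 0 = b
  · rw [if_pos h, if_pos]
    · norm_num
    · exact (sng_eq_iff _ _ _ _).mpr h
  · rw [if_neg h, if_neg]
    intro hc
    exact h ((sng_eq_iff _ _ _ _).mp hc)

lemma pair_eq (γ : (Fin 1 → ℕ) × (Fin 1 → ℕ)) (a b : ℕ) :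
    γ = (cst a, cst b) ↔ γ.1 0 = a ∧ γ.2 0 = b := by
  constructor
  · rintro rfl; exact ⟨rfl, rfl⟩
  · rintro ⟨h1, h2⟩
    refine Prod.ext ?_ ?_ <;> funext i <;> rw [Subsingleton.elim i 0]
    · exact h1
    · exact h2

lemma coeffW_expansion (c : ((Fin 1 → ℕ) × (Fin 1 → ℕ)) →₀ ℂ) (a b : ℕ) :
    coeffW a b (c.sum fun γ z => z • nom γ.1 γ.2) = c (cst a, cst b) := by
  rw [Finsupp.sum, map_sum]
  simp only [map_smul, coeffW_nom, smul_eq_mul, mul_ite, mul_one, mul_zero]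
  have key : ∀ γ ∈ c.support,
      (if γ.1 0 = a ∧ γ.2 0 = b then c γ else 0)
        = if γ = (cst a, cst b) then c γ else 0 := by
    intro γ _
    by_cases h : γ = (cst a, cst b)
    · rw [if_pos h, if_pos ((pair_eq γ a b).mp h)]
    · rw [if_neg h, if_neg fun hc => h ((pair_eq γ a b).mpr hc)]
  rw [Finset.sum_congr rfl key, Finset.sum_ite_eq' c.support (cst a, cst b) (fun γ => c γ)]
  by_cases hm : (cst a, cst b) ∈ c.support
  · rw [if_pos hm]
  · rw [if_neg hm]
    exact (Finsupp.notMem_support_iff.mp hm).symm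

lemma not_degLe_of_coeff {x : Weyl 1} {a b : ℕ} (h : coeffW a b x ≠ 0) {d : ℤ}
    (hd : d < (a : ℤ) + (b : ℤ)) : ¬ degLe x d := by
  rintro ⟨c, rfl, hsupp⟩
  rw [coeffW_expansion] at h
  have hm : (cst a, cst b) ∈ c.support := Finsupp.mem_support_iff.mpr h
  have hb := hsupp _ hm
  simp only [cst, Fin.sum_univ_one] at hb
  omega

end Rep

section DegLe

lemma degLe_zero (d : ℤ) : degLe (0 : Weyl 1) d :=
  ⟨0, by simp, by simp⟩

lemma degLe_smul_nom {z : ℂ} {α β : Fin 1 → ℕ} {d : ℤ}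
    (h : z = 0 ∨ ((∑ j, α j : ℕ) : ℤ) + ((∑ j, β j : ℕ) : ℤ) ≤ d) :
    degLe (z • nom α β) d := by
  rcases h with rfl | h
  · rw [zero_smul]; exact degLe_zero d
  · refine ⟨Finsupp.single (α, β) z, ?_, ?_⟩
    · rw [Finsupp.sum_single_index (by simp)]
    · intro γ hγ
      have := Finsupp.support_single_subset hγ
      simp only [Finset.mem_singleton] at this
      subst this
      exact h

lemma degLe_add {x y : Weyl 1} {d : ℤ} (hx : degLe x d) (hy : degLe y d) :
    degLe (x + y) d := by
  obtain ⟨cx, rfl, hcx⟩ := hx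
  obtain ⟨cy, rfl, hcy⟩ := hy
  refine ⟨cx + cy, ?_, ?_⟩
  · rw [Finsupp.sum_add_index' (fun γ => by simp) (fun γ z1 z2 => add_smul z1 z2 _)]
  · intro γ hγ
    have := Finsupp.support_add hγ
    rw [Finset.mem_union] at this
    rcases this with h | h
    · exact hcx γ h
    · exact hcy γ h

lemma degLe_sum {ι : Type*} (S : Finset ι) (f : ι → Weyl 1) (d : ℤ)
    (h : ∀ i ∈ S, degLe (f i) d) : degLe (∑ i ∈ S, f i) d := by
  classical
  induction S using Finset.induction_on with
  | empty => simpa using degLe_zero d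
  | insert a s hnot ih =>
      rw [Finset.sum_insert hnot]
      exact degLe_add (h _ (Finset.mem_insert_self _ _))
        (ih fun i hi => h i (Finset.mem_insert_of_mem hi))

end DegLe


section Alg

local notation "aa" => ann (0 : Fin 1)
local notation "cc" => cre (0 : Fin 1)

lemma rel_ac : aa * cc = cc * aa + 1 := by
  have h := RingQuot.mkAlgHom_rel ℂ (WeylRel.ann_cre (0 : Fin 1) 0)
  rw [if_pos rfl] at h
  simpa [ann, cre, map_mul, map_add, map_one] using h

lemma a_mul_c_pow_succ (t : ℕ) :
    aa * cc ^ (t + 1) = cc ^ (t + 1) * aa + ((t + 1 : ℕ) : ℂ) • cc ^ t := by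
  induction t with
  | zero => simpa using rel_ac
  | succ u ih =>
      calc aa * cc ^ (u + 1 + 1) = (aa * cc ^ (u + 1)) * cc := by
            rw [pow_succ, mul_assoc]
      _ = (cc ^ (u + 1) * aa + ((u + 1 : ℕ) : ℂ) • cc ^ u) * cc := by rw [ih]
      _ = cc ^ (u + 1) * (aa * cc) + ((u + 1 : ℕ) : ℂ) • (cc ^ u * cc) := by
            rw [add_mul, mul_assoc, smul_mul_assoc]
      _ = (cc ^ (u + 1) * (cc * aa) + cc ^ (u + 1)) + ((u + 1 : ℕ) : ℂ) • cc ^ (u + 1) := by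
            rw [rel_ac, mul_add, mul_one, ← pow_succ]
      _ = cc ^ (u + 1 + 1) * aa + ((u + 1 + 1 : ℕ) : ℂ) • cc ^ (u + 1) := by
            rw [← mul_assoc, ← pow_succ]
            push_cast
            module

lemma a_mul_c_pow (t : ℕ) :
    aa * cc ^ t = cc ^ t * aa + ((t : ℕ) : ℂ) • cc ^ (t - 1) := by
  cases t with
  | zero => simp
  | succ u =>
      rw [a_mul_c_pow_succ, Nat.add_sub_cancel]

/-- coefficient in the normal ordering of `a^s (a†)^(r')` -/
def coefN (s r' k : ℕ) : ℕ := k.factorial * s.choose k * r'.choose k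

/-- shifted auxiliary coefficient -/
def dcoef (s r' : ℕ) : ℕ → ℕ
  | 0 => 0
  | (k + 1) => coefN s r' k * (r' - k)

lemma coefN_zero (s r' : ℕ) : coefN s r' 0 = 1 := by simp [coefN]

lemma coefN_succ (s r' k : ℕ) :
    coefN (s + 1) r' (k + 1) = coefN s r' (k + 1) + coefN s r' k * (r' - k) := by
  have key : r'.choose (k + 1) * (k + 1) = r'.choose k * (r' - k) :=
    Nat.choose_succ_right_eq r' k
  have e1 : coefN (s + 1) r' (k + 1)
      = (k + 1).factorial * Nat.choose s (k + 1) * r'.choose (k + 1)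
        + k.factorial * s.choose k * (r'.choose (k + 1) * (k + 1)) := by
    unfold coefN
    rw [Nat.choose_succ_succ, Nat.factorial_succ]
    ring
  rw [e1, key]
  unfold coefN
  rw [Nat.factorial_succ]
  ring

lemma coefN_le {s r' k : ℕ} (h : coefN s r' k ≠ 0) : k ≤ s ∧ k ≤ r' := by
  constructor
  · by_contra hlt
    push_neg at hlt
    exact h (by unfold coefN; rw [Nat.choose_eq_zero_of_lt hlt]; ring)
  · by_contra hlt
    push_neg at hlt
    exact h (by unfold coefN; rw [Nat.choose_eq_zero_of_lt hlt]; ring)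

lemma expand (s r' : ℕ) :
    aa ^ s * cc ^ r' =
      ∑ k ∈ Finset.range (s + 1),
        ((coefN s r' k : ℕ) : ℂ) • (cc ^ (r' - k) * aa ^ (s - k)) := by
  induction s with
  | zero => simp [coefN]
  | succ s ih =>
      have step : ∀ k ∈ Finset.range (s + 1),
          ((coefN s r' k : ℕ) : ℂ) • (aa * (cc ^ (r' - k) * aa ^ (s - k)))
            = ((coefN s r' k : ℕ) : ℂ) • (cc ^ (r' - k) * aa ^ (s + 1 - k))
              + ((coefN s r' k * (r' - k) : ℕ) : ℂ) • (cc ^ (r' - (k + 1)) * aa ^ (s - k)) := by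
        intro k hk
        have hks : k ≤ s := Nat.lt_succ_iff.mp (Finset.mem_range.mp hk)
        rw [← mul_assoc, a_mul_c_pow (r' - k), add_mul, smul_add]
        congr 1
        · rw [mul_assoc, show aa * aa ^ (s - k) = aa ^ (s + 1 - k) from by
            rw [← pow_succ', show s - k + 1 = s + 1 - k from by omega]]
        · rw [smul_mul_assoc, smul_smul, Nat.sub_sub]
          push_cast
          ring_nf
      have hrw : aa ^ (s + 1) * cc ^ r' = ∑ k ∈ Finset.range (s + 1),
          ((coefN s r' k : ℕ) : ℂ) • (aa * (cc ^ (r' - k) * aa ^ (s - k))) := by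
        rw [pow_succ', mul_assoc, ih, Finset.mul_sum]
        exact Finset.sum_congr rfl fun k _ => mul_smul_comm _ _ _
      rw [hrw, Finset.sum_congr rfl step, Finset.sum_add_distrib]
      have hsplit : ∀ k, ((coefN (s + 1) r' k : ℕ) : ℂ) • (cc ^ (r' - k) * aa ^ (s + 1 - k))
          = ((coefN s r' k : ℕ) : ℂ) • (cc ^ (r' - k) * aa ^ (s + 1 - k))
            + ((dcoef s r' k : ℕ) : ℂ) • (cc ^ (r' - k) * aa ^ (s + 1 - k)) := by
        intro k
        rw [← add_smul]
        congr 1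
        cases k with
        | zero => simp [coefN_zero, dcoef]
        | succ k =>
            rw [coefN_succ]
            push_cast [dcoef]
            ring
      have hfinal : (∑ k ∈ Finset.range (s + 1 + 1),
            ((coefN (s + 1) r' k : ℕ) : ℂ) • (cc ^ (r' - k) * aa ^ (s + 1 - k)))
          = (∑ k ∈ Finset.range (s + 1),
              ((coefN s r' k : ℕ) : ℂ) • (cc ^ (r' - k) * aa ^ (s + 1 - k)))
            + ∑ k ∈ Finset.range (s + 1),
                ((coefN s r' k * (r' - k) : ℕ) : ℂ) • (cc ^ (r' - (k + 1)) * aa ^ (s - k)) := by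
        rw [Finset.sum_congr rfl fun k _ => hsplit k, Finset.sum_add_distrib]
        congr 1
        · rw [Finset.sum_range_succ, show coefN s r' (s + 1) = 0 by
            unfold coefN; rw [Nat.choose_succ_self]; ring]
          simp
        · rw [Finset.sum_range_succ']
          have g0 : ((dcoef s r' 0 : ℕ) : ℂ) • (cc ^ (r' - 0) * aa ^ (s + 1 - 0)) = 0 := by
            simp [dcoef]
          rw [g0, add_zero]
          refine Finset.sum_congr rfl fun k _ => ?_
          have : s + 1 - (k + 1) = s - k := Nat.succ_sub_succ s k
          rw [this]
          rfl
      exact hfinal.symm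

lemma mul_formula (r s r' s' : ℕ) :
    (cc ^ r * aa ^ s) * (cc ^ r' * aa ^ s') =
      ∑ k ∈ Finset.range (s + 1),
        ((coefN s r' k : ℕ) : ℂ) • (cc ^ (r + r' - k) * aa ^ (s + s' - k)) := by
  have h1 : (cc ^ r * aa ^ s) * (cc ^ r' * aa ^ s')
      = cc ^ r * (aa ^ s * cc ^ r') * aa ^ s' := by
    rw [mul_assoc, mul_assoc, mul_assoc]
  rw [h1, expand, Finset.mul_sum, Finset.sum_mul]
  refine Finset.sum_congr rfl fun k hk => ?_
  have hks : k ≤ s := Nat.lt_succ_iff.mp (Finset.mem_range.mp hk)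
  rw [mul_smul_comm, smul_mul_assoc]
  by_cases hkr : k ≤ r'
  · have e : cc ^ r * (cc ^ (r' - k) * aa ^ (s - k)) * aa ^ s'
        = cc ^ (r + r' - k) * aa ^ (s + s' - k) := by
      rw [← mul_assoc, ← pow_add, mul_assoc, ← pow_add,
        show r + (r' - k) = r + r' - k from by omega,
        show s - k + s' = s + s' - k from by omega]
    rw [e]
  · have : coefN s r' k = 0 := by
      unfold coefN
      rw [Nat.choose_eq_zero_of_lt (show r' < k from by omega)]
      ring
    rw [this]
    simp

lemma comm_formula (r s r' s' : ℕ) :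
    comm (cc ^ r * aa ^ s) (cc ^ r' * aa ^ s') =
      ∑ k ∈ Finset.range (max s s' + 1),
        (((coefN s r' k : ℕ) : ℂ) - ((coefN s' r k : ℕ) : ℂ))
          • (cc ^ (r + r' - k) * aa ^ (s + s' - k)) := by
  have e1 : (cc ^ r * aa ^ s) * (cc ^ r' * aa ^ s') =
      ∑ k ∈ Finset.range (max s s' + 1),
        ((coefN s r' k : ℕ) : ℂ) • (cc ^ (r + r' - k) * aa ^ (s + s' - k)) := by
    rw [mul_formula]
    refine Finset.sum_subset (by
      intro x hx
      simp only [Finset.mem_range] at *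
      omega) ?_
    intro k _ hk
    simp only [Finset.mem_range] at hk
    have : coefN s r' k = 0 := by
      unfold coefN
      rw [Nat.choose_eq_zero_of_lt (show s < k from by omega)]
      ring
    rw [this]
    simp
  have e2 : (cc ^ r' * aa ^ s') * (cc ^ r * aa ^ s) =
      ∑ k ∈ Finset.range (max s s' + 1),
        ((coefN s' r k : ℕ) : ℂ) • (cc ^ (r + r' - k) * aa ^ (s + s' - k)) := by
    rw [mul_formula]
    have hc : ∀ k, cc ^ (r' + r - k) * aa ^ (s' + s - k)
        = cc ^ (r + r' - k) * aa ^ (s + s' - k) := by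
      intro k
      rw [Nat.add_comm r' r, Nat.add_comm s' s]
    refine Eq.trans (Finset.sum_congr rfl fun k _ => by rw [hc]) ?_
    refine Finset.sum_subset (by
      intro x hx
      simp only [Finset.mem_range] at *
      omega) ?_
    intro k _ hk
    simp only [Finset.mem_range] at hk
    have : coefN s' r k = 0 := by
      unfold coefN
      rw [Nat.choose_eq_zero_of_lt (show s' < k from by omega)]
      ring
    rw [this]
    simp
  rw [comm, e1, e2, ← Finset.sum_sub_distrib]
  refine Finset.sum_congr rfl fun k _ => ?_
  exact (sub_smul ((coefN s r' k : ℕ) : ℂ) ((coefN s' r k : ℕ) : ℂ) _).symm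

end Alg


section Final

local notation "aa" => ann (0 : Fin 1)
local notation "cc" => cre (0 : Fin 1)

@[simp] lemma cst_apply (p : ℕ) (i : Fin 1) : cst p i = p := rfl

lemma two_mul_choose_two : ∀ n : ℕ, 2 * n.choose 2 = n * (n - 1) := by
  intro n
  induction n with
  | zero => rfl
  | succ n ih =>
      rw [Nat.choose_succ_succ, Nat.mul_add, ih, Nat.choose_one_right, Nat.add_sub_cancel]
      cases n with
      | zero => rfl
      | succ v =>
          rw [Nat.add_sub_cancel]
          ring

lemma comm_expansion_nom (r s r' s' : ℕ) :
    comm (cc ^ r * aa ^ s) (cc ^ r' * aa ^ s') =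
      ∑ k ∈ Finset.range (max s s' + 1),
        (((coefN s r' k : ℕ) : ℂ) - ((coefN s' r k : ℕ) : ℂ))
          • nom (cst (r + r' - k)) (cst (s + s' - k)) := by
  rw [comm_formula]
  exact Finset.sum_congr rfl fun k _ => by rw [nom_eq]

lemma coeffW_comm (r s r' s' a b : ℕ) :
    coeffW a b (comm (cc ^ r * aa ^ s) (cc ^ r' * aa ^ s')) =
      ∑ k ∈ Finset.range (max s s' + 1),
        (((coefN s r' k : ℕ) : ℂ) - ((coefN s' r k : ℕ) : ℂ))
          * (if r + r' - k = a ∧ s + s' - k = b then 1 else 0) := by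
  rw [comm_expansion_nom, map_sum]
  refine Finset.sum_congr rfl fun k _ => ?_
  rw [map_smul, coeffW_nom, smul_eq_mul, cst_apply, cst_apply]

lemma comm_eq_zero_of_coef {r s r' s' : ℕ}
    (hz : ∀ k, 1 ≤ k → coefN s r' k = coefN s' r k) :
    comm (cc ^ r * aa ^ s) (cc ^ r' * aa ^ s') = 0 := by
  rw [comm_formula]
  refine Finset.sum_eq_zero fun k _ => ?_
  cases k with
  | zero => rw [coefN_zero, coefN_zero, sub_self, zero_smul]
  | succ k => rw [hz (k + 1) (by omega), sub_self, zero_smul]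

lemma coefN_vanish_left {s r' k : ℕ} (h : s < k) : coefN s r' k = 0 := by
  unfold coefN
  rw [Nat.choose_eq_zero_of_lt h]
  ring

lemma coefN_vanish_right {s r' k : ℕ} (h : r' < k) : coefN s r' k = 0 := by
  unfold coefN
  rw [Nat.choose_eq_zero_of_lt h]
  ring

lemma coefN_one (s r' : ℕ) : coefN s r' 1 = s * r' := by
  simp [coefN, Nat.choose_one_right]

lemma coefN_two (s r' : ℕ) : coefN s r' 2 = 2 * (s.choose 2 * r'.choose 2) := by
  unfold coefN
  rw [show Nat.factorial 2 = 2 from rfl]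
  ring

lemma case_ne (r s r' s' : ℕ) (hne : r' * s ≠ r * s') :
    hasDeg (comm (cc ^ r * aa ^ s) (cc ^ r' * aa ^ s'))
      ((r : ℤ) + (s : ℤ) + (r' : ℤ) + (s' : ℤ) - 2) := by
  have hrr : 1 ≤ r + r' := by
    by_contra h0
    push_neg at h0
    rw [show r = 0 from by omega, show r' = 0 from by omega] at hne
    simp at hne
  have hss : 1 ≤ s + s' := by
    by_contra h0
    push_neg at h0
    rw [show s = 0 from by omega, show s' = 0 from by omega] at hne
    simp at hne
  constructor
  · rw [comm_expansion_nom]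
    refine degLe_sum _ _ _ fun k hk => degLe_smul_nom ?_
    cases k with
    | zero => left; rw [coefN_zero, coefN_zero, sub_self]
    | succ k =>
        right
        simp only [Fin.sum_univ_one, cst_apply]
        omega
  · refine not_degLe_of_coeff (a := r + r' - 1) (b := s + s' - 1) ?_ ?_
    · rw [coeffW_comm]
      have hoff : ∀ k ∈ Finset.range (max s s' + 1), k ≠ 1 →
          (((coefN s r' k : ℕ) : ℂ) - ((coefN s' r k : ℕ) : ℂ))
            * (if r + r' - k = r + r' - 1 ∧ s + s' - k = s + s' - 1 then 1 else 0) = 0 := by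
        intro k hk hk1
        by_cases hc : r + r' - k = r + r' - 1 ∧ s + s' - k = s + s' - 1
        · obtain ⟨hc1, hc2⟩ := hc
          rw [if_pos ⟨hc1, hc2⟩, mul_one]
          have z1 : ((coefN s r' k : ℕ) : ℂ) = 0 := by
            rcases Nat.eq_zero_or_pos (coefN s r' k) with hz | hz
            · rw [hz]; norm_num
            · exfalso
              obtain ⟨hks, hkr'⟩ := coefN_le hz.ne'
              omega
          have z2 : ((coefN s' r k : ℕ) : ℂ) = 0 := by
            rcases Nat.eq_zero_or_pos (coefN s' r k) with hz | hz
            · rw [hz]; norm_num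
            · exfalso
              obtain ⟨hks, hkr⟩ := coefN_le hz.ne'
              omega
          rw [z1, z2, sub_self]
        · rw [if_neg hc, mul_zero]
      rw [Finset.sum_eq_single_of_mem 1 (by simp only [Finset.mem_range]; omega) hoff]
      rw [if_pos ⟨rfl, rfl⟩, mul_one, coefN_one, coefN_one]
      intro hzero
      rw [sub_eq_zero, Nat.cast_inj] at hzero
      exact hne (by rw [mul_comm r' s, mul_comm r s']; omega)
    · omega

lemma case_eq (r s r' s' : ℕ)
    (h : comm (cc ^ r * aa ^ s) (cc ^ r' * aa ^ s') ≠ 0)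
    (heq : r' * s = r * s') :
    hasDeg (comm (cc ^ r * aa ^ s) (cc ^ r' * aa ^ s'))
      ((r : ℤ) + (s : ℤ) + (r' : ℤ) + (s' : ℤ) - 4) := by
  have hm : 1 ≤ r' * s := by
    rcases Nat.eq_zero_or_pos (r' * s) with h0 | h0
    · exfalso
      refine h (comm_eq_zero_of_coef fun k hk => ?_)
      have h1 : s * r' = 0 := by rw [mul_comm]; exact h0
      have h2 : r * s' = 0 := by rw [← heq]; exact h0
      have e1 : coefN s r' k = 0 := by
        rcases Nat.mul_eq_zero.mp h1 with hz | hz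
        · exact coefN_vanish_left (by omega)
        · exact coefN_vanish_right (by omega)
      have e2 : coefN s' r k = 0 := by
        rcases Nat.mul_eq_zero.mp h2 with hz | hz
        · exact coefN_vanish_right (by omega)
        · exact coefN_vanish_left (by omega)
      rw [e1, e2]
    · exact h0
  have hm2 : 1 ≤ r * s' := by rw [← heq]; exact hm
  have hs : 1 ≤ s := by
    rcases Nat.eq_zero_or_pos s with h0 | h0
    · rw [h0, mul_zero] at hm; omega
    · exact h0
  have hr' : 1 ≤ r' := by
    rcases Nat.eq_zero_or_pos r' with h0 | h0
    · rw [h0, zero_mul] at hm; omega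
    · exact h0
  have hs' : 1 ≤ s' := by
    rcases Nat.eq_zero_or_pos s' with h0 | h0
    · rw [h0, mul_zero] at hm2; omega
    · exact h0
  have hr : 1 ≤ r := by
    rcases Nat.eq_zero_or_pos r with h0 | h0
    · rw [h0, zero_mul] at hm2; omega
    · exact h0
  have hd2 : ((coefN s r' 2 : ℕ) : ℂ) - ((coefN s' r 2 : ℕ) : ℂ) ≠ 0 := by
    intro hz0
    rw [sub_eq_zero, Nat.cast_inj] at hz0
    have key : s.choose 2 * r'.choose 2 = s'.choose 2 * r.choose 2 := by
      rw [coefN_two, coefN_two] at hz0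
      omega
    have hZ : (s : ℤ) * ((s : ℤ) - 1) * ((r' : ℤ) * ((r' : ℤ) - 1))
        = (s' : ℤ) * ((s' : ℤ) - 1) * ((r : ℤ) * ((r : ℤ) - 1)) := by
      have h4 : (2 * s.choose 2) * (2 * r'.choose 2) = (2 * s'.choose 2) * (2 * r.choose 2) := by
        calc (2 * s.choose 2) * (2 * r'.choose 2) = 4 * (s.choose 2 * r'.choose 2) := by ring
        _ = 4 * (s'.choose 2 * r.choose 2) := by rw [key]
        _ = (2 * s'.choose 2) * (2 * r.choose 2) := by ring
      rw [two_mul_choose_two, two_mul_choose_two, two_mul_choose_two, two_mul_choose_two] at h4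
      have hcast := congrArg (fun n : ℕ => (n : ℤ)) h4
      push_cast [Nat.cast_sub hs, Nat.cast_sub hr', Nat.cast_sub hs', Nat.cast_sub hr] at hcast
      linear_combination hcast
    have heqZ : (r' : ℤ) * s = (r : ℤ) * s' := by exact_mod_cast heq
    have hMne : (r : ℤ) * s' ≠ 0 := by
      have hne0 : r * s' ≠ 0 := by omega
      exact_mod_cast hne0
    have hsum : (s : ℤ) + r' = (s' : ℤ) + r := by
      have hmul : (r : ℤ) * s' * ((s : ℤ) + r') = (r : ℤ) * s' * ((s' : ℤ) + r) := by
        linear_combination (-1 : ℤ) * hZ + ((s : ℤ) * r' + (r : ℤ) * s' - s - r' + 1) * heqZ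
      exact mul_left_cancel₀ hMne hmul
    have hfact : ((s : ℤ) - r) * ((r' : ℤ) - r) = 0 := by
      linear_combination heqZ - (r : ℤ) * hsum
    rcases mul_eq_zero.mp hfact with hca | hcb
    · have hsr : s = r := by omega
      rw [hsr] at heq
      have h' : r * r' = r * s' := by rw [mul_comm r r']; exact heq
      have hr's' : r' = s' := Nat.eq_of_mul_eq_mul_left (by omega) h'
      refine h (comm_eq_zero_of_coef fun k hk => ?_)
      rw [hsr, hr's']
      unfold coefN
      ring
    · have hr'r : r' = r := by omega
      rw [hr'r] at heq
      have hss' : s = s' := Nat.eq_of_mul_eq_mul_left (by omega) heq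
      refine h ?_
      rw [hr'r, hss']
      simp [comm]
  have hN2 : 2 ≤ max s s' := by
    by_contra h0
    push_neg at h0
    refine hd2 ?_
    rw [coefN_vanish_left (show s < 2 from by omega),
      coefN_vanish_left (show s' < 2 from by omega)]
    norm_num
  have hrr2 : 2 ≤ r + r' := by omega
  have hss2 : 2 ≤ s + s' := by omega
  constructor
  · rw [comm_expansion_nom]
    refine degLe_sum _ _ _ fun k hk => degLe_smul_nom ?_
    rcases k with _ | (_ | k)
    · left; rw [coefN_zero, coefN_zero, sub_self]
    · left
      rw [coefN_one, coefN_one]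
      have hmm : s * r' = s' * r := by rw [mul_comm s r', mul_comm s' r]; exact heq
      rw [sub_eq_zero, Nat.cast_inj]
      exact hmm
    · right
      simp only [Fin.sum_univ_one, cst_apply]
      omega
  · refine not_degLe_of_coeff (a := r + r' - 2) (b := s + s' - 2) ?_ ?_
    · rw [coeffW_comm]
      have hoff : ∀ k ∈ Finset.range (max s s' + 1), k ≠ 2 →
          (((coefN s r' k : ℕ) : ℂ) - ((coefN s' r k : ℕ) : ℂ))
            * (if r + r' - k = r + r' - 2 ∧ s + s' - k = s + s' - 2 then 1 else 0) = 0 := by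
        intro k hk hk2
        by_cases hc : r + r' - k = r + r' - 2 ∧ s + s' - k = s + s' - 2
        · obtain ⟨hc1, hc2⟩ := hc
          rw [if_pos ⟨hc1, hc2⟩, mul_one]
          have z1 : ((coefN s r' k : ℕ) : ℂ) = 0 := by
            rcases Nat.eq_zero_or_pos (coefN s r' k) with hz | hz
            · rw [hz]; norm_num
            · exfalso
              obtain ⟨hks, hkr'⟩ := coefN_le hz.ne'
              omega
          have z2 : ((coefN s' r k : ℕ) : ℂ) = 0 := by
            rcases Nat.eq_zero_or_pos (coefN s' r k) with hz | hz
            · rw [hz]; norm_num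
            · exfalso
              obtain ⟨hks, hkr⟩ := coefN_le hz.ne'
              omega
          rw [z1, z2, sub_self]
        · rw [if_neg hc, mul_zero]
      rw [Finset.sum_eq_single_of_mem 2 (by simp only [Finset.mem_range]; omega) hoff]
      rw [if_pos ⟨rfl, rfl⟩, mul_one]
      exact hd2
    · omega

end Final


/-- For normal-ordered monomials `a^γ = (a†)^r a^s` and
`a^δ = (a†)^r' a^s'` in the single-mode Weyl algebra with nonzero commutator:
if `r'·s = r·s'` then `deg([a^γ, a^δ]) = r + s + r' + s' - 4`, and otherwise
`deg([a^γ, a^δ]) = r + s + r' + s' - 2`. -/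
theorem statement6 (r s r' s' : ℕ)
    (h : comm ((cre (0 : Fin 1)) ^ r * (ann (0 : Fin 1)) ^ s)
        ((cre (0 : Fin 1)) ^ r' * (ann (0 : Fin 1)) ^ s') ≠ 0) :
    (r' * s = r * s' →
      hasDeg (comm ((cre (0 : Fin 1)) ^ r * (ann (0 : Fin 1)) ^ s)
          ((cre (0 : Fin 1)) ^ r' * (ann (0 : Fin 1)) ^ s'))
        ((r : ℤ) + (s : ℤ) + (r' : ℤ) + (s' : ℤ) - 4)) ∧
    (r' * s ≠ r * s' →
      hasDeg (comm ((cre (0 : Fin 1)) ^ r * (ann (0 : Fin 1)) ^ s)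
          ((cre (0 : Fin 1)) ^ r' * (ann (0 : Fin 1)) ^ s'))
        ((r : ℤ) + (s : ℤ) + (r' : ℤ) + (s' : ℤ) - 2)) := by
  constructor
  · intro hcase
    exact case_eq r s r' s' h hcase
  · intro hcase
    exact case_ne r s r' s' hcase

end WeylPaper
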